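/- Let f, g : ℝⁿ → ℝ be continuous functions and let K, L be star bodies in ℝⁿ (compact sets star-shaped with respect to the origin, containing the origin in their interior, with continuous positive radial functions ρ_K, ρ_L on the unit sphere). Define q : ℝⁿ → ℝ by q(x) = f(x) if x ∈ K \ L, q(x) = g(x) if x ∈ L \ K, and q(x) = 0 otherwise. Then the function Q : S^{n-1} → ℝ defined by Q(v) = ∫_{ρ_L(v)}^{ρ_K(v)} q(r v) dr is continuous on the unit sphere. -/
import Mathlib


open MeasureTheory Set
open scoped RealInnerProductSpace FourierTransform

noncomputable section
open scoped Classical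

/-- A star body in ℝⁿ, given by its continuous positive radial function on the unit sphere. -/
structure StarBody (n : ℕ) where
  ρ : EuclideanSpace ℝ (Fin n) → ℝ
  contOn : ContinuousOn ρ (Metric.sphere 0 1)
  pos : ∀ v ∈ Metric.sphere (0 : EuclideanSpace ℝ (Fin n)) 1, 0 < ρ v

/-- The set of points of a star body. -/
def StarBody.carrier {n : ℕ} (K : StarBody n) : Set (EuclideanSpace ℝ (Fin n)) :=
  {x | x = 0 ∨ ‖x‖ ≤ K.ρ (‖x‖⁻¹ • x)}

lemma smul_mem_carrier_iff {n : ℕ} (K : StarBody n) {v : EuclideanSpace ℝ (Fin n)}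
    (hv : v ∈ Metric.sphere (0 : EuclideanSpace ℝ (Fin n)) 1) {r : ℝ} (hr : 0 < r) :
    r • v ∈ K.carrier ↔ r ≤ K.ρ v := by
  have hvn : ‖v‖ = 1 := by simpa using hv
  have hnorm : ‖r • v‖ = r := by
    rw [norm_smul, hvn, mul_one, Real.norm_eq_abs, abs_of_pos hr]
  have hne : r • v ≠ 0 := by
    intro h
    rw [h, norm_zero] at hnorm
    exact hr.ne hnorm
  have hsmul : ‖r • v‖⁻¹ • (r • v) = v := by
    rw [hnorm, smul_smul, inv_mul_cancel₀ hr.ne', one_smul]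
  simp only [StarBody.carrier, mem_setOf_eq, hne, false_or, hnorm, smul_smul,
    inv_mul_cancel₀ hr.ne', one_smul]

/-- Lemma 4.1: continuity of the piecewise radial integral. -/
theorem radial_integral_continuous {n : ℕ} (K L : StarBody n)
    (f g q : EuclideanSpace ℝ (Fin n) → ℝ)
    (hf : Continuous f) (hg : Continuous g)
    (hq : ∀ x, q x =
      if x ∈ K.carrier \ L.carrier then f x
      else if x ∈ L.carrier \ K.carrier then g x
      else 0) :
    ContinuousOn (fun v : EuclideanSpace ℝ (Fin n) =>
        ∫ r in (L.ρ v)..(K.ρ v), q (r • v))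
      (Metric.sphere 0 1) := by
  set S := Metric.sphere (0 : EuclideanSpace ℝ (Fin n)) 1 with hS
  -- the continuous replacement
  set G : EuclideanSpace ℝ (Fin n) → ℝ := fun v =>
    ((∫ r in (0:ℝ)..(max (L.ρ v) (K.ρ v)), f (r • v)) - ∫ r in (0:ℝ)..(L.ρ v), f (r • v))
      - ((∫ r in (0:ℝ)..(max (L.ρ v) (K.ρ v)), g (r • v)) - ∫ r in (0:ℝ)..(K.ρ v), g (r • v))
    with hG
  have hGcont : ContinuousOn G S := by
    rw [continuousOn_iff_continuous_restrict]
    have hL : Continuous (fun v : S => L.ρ (v : EuclideanSpace ℝ (Fin n))) :=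
      continuousOn_iff_continuous_restrict.mp L.contOn
    have hK : Continuous (fun v : S => K.ρ (v : EuclideanSpace ℝ (Fin n))) :=
      continuousOn_iff_continuous_restrict.mp K.contOn
    have hmax : Continuous (fun v : S => max (L.ρ (v : EuclideanSpace ℝ (Fin n)))
        (K.ρ (v : EuclideanSpace ℝ (Fin n)))) := hL.max hK
    have hfe : Continuous (Function.uncurry
        (fun (v : S) (r : ℝ) => f (r • (v : EuclideanSpace ℝ (Fin n))))) := by
      apply hf.comp
      exact continuous_snd.smul (continuous_subtype_val.comp continuous_fst)
    have hge : Continuous (Function.uncurry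
        (fun (v : S) (r : ℝ) => g (r • (v : EuclideanSpace ℝ (Fin n))))) := by
      apply hg.comp
      exact continuous_snd.smul (continuous_subtype_val.comp continuous_fst)
    have c1 := intervalIntegral.continuous_parametric_intervalIntegral_of_continuous
      (μ := volume) (a₀ := 0) hfe hmax
    have c2 := intervalIntegral.continuous_parametric_intervalIntegral_of_continuous
      (μ := volume) (a₀ := 0) hfe hL
    have c3 := intervalIntegral.continuous_parametric_intervalIntegral_of_continuous
      (μ := volume) (a₀ := 0) hge hmax
    have c4 := intervalIntegral.continuous_parametric_intervalIntegral_of_continuous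
      (μ := volume) (a₀ := 0) hge hK
    exact ((c1.sub c2).sub (c3.sub c4))
  apply hGcont.congr
  intro v hv
  have hvn : ‖v‖ = 1 := by rw [hS] at hv; simpa using hv
  have ha : 0 < L.ρ v := L.pos v hv
  have hb : 0 < K.ρ v := K.pos v hv
  set a := L.ρ v
  set b := K.ρ v
  have intf : ∀ x y : ℝ, IntervalIntegrable (fun r => f (r • v)) volume x y := fun x y =>
    (hf.comp (continuous_id.smul continuous_const)).intervalIntegrable x y
  have intg : ∀ x y : ℝ, IntervalIntegrable (fun r => g (r • v)) volume x y := fun x y =>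
    (hg.comp (continuous_id.smul continuous_const)).intervalIntegrable x y
  have e1 : (∫ r in (0:ℝ)..(max a b), f (r • v)) - ∫ r in (0:ℝ)..a, f (r • v)
      = ∫ r in a..(max a b), f (r • v) :=
    intervalIntegral.integral_interval_sub_left (intf 0 (max a b)) (intf 0 a)
  have e2 : (∫ r in (0:ℝ)..(max a b), g (r • v)) - ∫ r in (0:ℝ)..b, g (r • v)
      = ∫ r in b..(max a b), g (r • v) :=
    intervalIntegral.integral_interval_sub_left (intg 0 (max a b)) (intg 0 b)
  have hGv : G v = (∫ r in a..(max a b), f (r • v)) - ∫ r in b..(max a b), g (r • v) := by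
    rw [hG]; dsimp only; rw [e1, e2]
  rw [hGv]
  rcases le_or_gt a b with hab | hab
  · -- `a ≤ b` : on `(a, b]` we have `q (r • v) = f (r • v)`
    rw [max_eq_right hab, intervalIntegral.integral_same, sub_zero]
    apply intervalIntegral.integral_congr_ae
    apply Filter.Eventually.of_forall
    intro r hr
    rw [uIoc_of_le hab] at hr
    have hr0 : 0 < r := ha.trans hr.1
    have hK : r • v ∈ K.carrier := (smul_mem_carrier_iff K hv hr0).mpr hr.2
    have hL : r • v ∉ L.carrier := fun h =>
      absurd ((smul_mem_carrier_iff L hv hr0).mp h) (not_le.mpr hr.1)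
    rw [hq (r • v), if_pos ⟨hK, hL⟩]
  · -- `b < a` : on `(b, a]` we have `q (r • v) = g (r • v)`
    rw [max_eq_left hab.le, intervalIntegral.integral_same, zero_sub,
      ← intervalIntegral.integral_symm]
    apply intervalIntegral.integral_congr_ae
    apply Filter.Eventually.of_forall
    intro r hr
    rw [uIoc_of_ge hab.le] at hr
    have hr0 : 0 < r := hb.trans hr.1
    have hL : r • v ∈ L.carrier := (smul_mem_carrier_iff L hv hr0).mpr hr.2
    have hK : r • v ∉ K.carrier := fun h =>
      absurd ((smul_mem_carrier_iff K hv hr0).mp h) (not_le.mpr hr.1)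
    rw [hq (r • v), if_neg (fun h => hK h.1), if_pos ⟨hL, hK⟩]
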